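/- Let u, v be unit vectors in ℝ^n and let r be a random vector distributed uniformly on the unit sphere of ℝ^n. Then 𝔼[sign(⟨r,u⟩)·sign(⟨r,v⟩)] = 1 − (2/π)·arccos(⟨u,v⟩). -/

import Mathlib

/-!
Write `S(x, y) = separatingNormals x y` for the set of normals `r` whose hyperplane `r^⊥`
separates `x` and `y`; the integrand is `1 - 2 · 𝟙_{S(u, v)}`. Every proper subspace `V` is
`μ`-null: rotating `V` in the plane of a unit vector of `V` and a unit vector orthogonal to `V`
gives uncountably many copies of equal measure, any two of which meet in a smaller subspace. Along
a great circle `w γ`, the hyperplane of almost every `r` crosses an arc of length `≤ π` at most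
once, so `γ ↦ μ S(w 0, w γ)` is additive on `[0, π]`, by rotation invariance; being nonnegative and
equal to `1` at `π`, it is `γ / π`.
-/

open MeasureTheory Real

noncomputable def sgn (t : ℝ) : ℝ := if 0 ≤ t then 1 else -1

open Set Function Filter Topology RealInnerProductSpace

section CauchyEquation

variable {L : ℝ} {F : ℝ → ℝ} (hF0 : F 0 = 0)
  (hadd : ∀ s t, 0 < s → 0 < t → s + t ≤ L → F (s + t) = F s + F t)
include hF0 hadd

theorem map_nat_mul_of_add (k : ℕ) {h : ℝ} (hh : 0 < h) (hkh : k * h ≤ L) :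
    F (k * h) = k * F h := by
  induction k with
  | zero => simp [hF0]
  | succ k ih =>
    rcases k.eq_zero_or_pos with rfl | hk
    · simp
    have hk' : (0 : ℝ) < k := by exact_mod_cast hk
    push_cast at hkh ⊢
    rw [add_one_mul] at hkh ⊢
    rw [hadd _ _ (by positivity) hh hkh, ih (by linarith)]
    ring

theorem monotoneOn_of_add (hF : ∀ x ∈ Icc 0 L, 0 ≤ F x) : MonotoneOn F (Icc 0 L) := by
  intro x hx y hy hxy
  rcases hx.1.eq_or_lt with rfl | hx0
  · rw [hF0]; exact hF y hy
  rcases hxy.eq_or_lt with rfl | hxy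
  · rfl
  have := hadd x (y - x) hx0 (by linarith) (by linarith [hy.2])
  rw [add_sub_cancel] at this
  linarith [hF (y - x) ⟨by linarith, by linarith [hy.2, hx.1]⟩]

theorem map_nat_div_mul_of_add (hL : 0 < L) {k m : ℕ} (hm : 0 < m) (hkm : k ≤ m) :
    F (k / m * L) = k / m * F L := by
  have hm' : (0 : ℝ) < m := by exact_mod_cast hm
  have hkm' : (k : ℝ) ≤ m := by exact_mod_cast hkm
  have hFL : F L = m * F (L / m) := by
    simpa [mul_div_cancel₀ _ hm'.ne'] using
      map_nat_mul_of_add hF0 hadd m (h := L / m) (by positivity) (by field_simp; rfl)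
  calc F (k / m * L) = F (k * (L / m)) := by ring_nf
    _ = k * F (L / m) := map_nat_mul_of_add hF0 hadd k (by positivity) <| by
        rw [← mul_div_assoc, div_le_iff₀ hm', mul_comm]; gcongr
    _ = k / m * F L := by rw [hFL]; field_simp

theorem eq_div_mul_of_add (hL : 0 < L) (hF : ∀ x ∈ Icc 0 L, 0 ≤ F x) {x : ℝ}
    (hx : x ∈ Icc 0 L) : F x = x / L * F L := by
  set c := x / L
  have hc0 : 0 ≤ c := div_nonneg hx.1 hL.le
  have hc1 : c ≤ 1 := div_le_one_of_le₀ hx.2 hL.le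
  have hmono := monotoneOn_of_add hF0 hadd hF
  have hcx : c * L = x := div_mul_cancel₀ x hL.ne'
  have mem_Icc : ∀ {k m : ℕ}, 0 < m → k ≤ m → (k : ℝ) / m * L ∈ Icc 0 L := fun hm hkm =>
    ⟨by positivity, mul_le_of_le_one_left hL.le
      (div_le_one_of_le₀ (by exact_mod_cast hkm) (Nat.cast_nonneg _))⟩
  have lower : ∀ᶠ m : ℕ in atTop, ⌊c * m⌋₊ / (m : ℝ) * F L ≤ F x := by
    filter_upwards [eventually_gt_atTop 0] with m hm
    have hkm : ⌊c * m⌋₊ ≤ m := Nat.floor_le_of_le (by nlinarith)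
    rw [← map_nat_div_mul_of_add hF0 hadd hL hm hkm]
    refine hmono (mem_Icc hm hkm) hx ?_
    rw [← hcx]
    gcongr
    rw [div_le_iff₀ (by positivity)]
    exact Nat.floor_le (by positivity)
  have upper : ∀ᶠ m : ℕ in atTop, F x ≤ ⌈c * m⌉₊ / (m : ℝ) * F L := by
    filter_upwards [eventually_gt_atTop 0] with m hm
    have hkm : ⌈c * m⌉₊ ≤ m := Nat.ceil_le.mpr (by nlinarith)
    rw [← map_nat_div_mul_of_add hF0 hadd hL hm hkm]
    refine hmono hx (mem_Icc hm hkm) ?_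
    rw [← hcx]
    gcongr
    rw [le_div_iff₀ (by positivity)]
    exact Nat.le_ceil _
  have hlim : ∀ {f : ℝ → ℝ}, Tendsto f atTop (𝓝 c) →
      Tendsto (fun m : ℕ => f m * F L) atTop (𝓝 (c * F L)) := fun h =>
    (h.comp tendsto_natCast_atTop_atTop).mul_const (F L)
  exact le_antisymm (ge_of_tendsto (hlim (tendsto_nat_ceil_mul_div_atTop hc0)) upper)
    (le_of_tendsto (hlim (tendsto_nat_floor_mul_div_atTop hc0)) lower)

end CauchyEquation

theorem sgn_ne_sgn_iff {p q : ℝ} : sgn p ≠ sgn q ↔ (0 ≤ p ↔ q < 0) := by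
  unfold sgn
  split_ifs with hp hq hq <;> norm_num [hp, hq]; linarith

/-- The function `θ ↦ cos θ * p + sin θ * q` changes sign at most once on an interval of length
`≤ π`, unless it vanishes at its left end. -/
theorem eq_zero_of_sgn_ne_of_sgn_ne {p q s t : ℝ} (hs : 0 < s) (ht : 0 < t) (hst : s + t ≤ π)
    (h₁ : sgn p ≠ sgn (cos s * p + sin s * q))
    (h₂ : sgn (cos s * p + sin s * q) ≠ sgn (cos (s + t) * p + sin (s + t) * q)) : p = 0 := by
  set g₁ := cos s * p + sin s * q
  set g₂ := cos (s + t) * p + sin (s + t) * q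
  have key : sin t * p + sin s * g₂ = sin (s + t) * g₁ := by
    simp only [g₁, g₂, sin_add, cos_add]
    linear_combination (-(sin t * p)) * sin_sq_add_cos_sq s
  have hsin_s : 0 < sin s := sin_pos_of_pos_of_lt_pi hs (by linarith)
  have hsin_t : 0 < sin t := sin_pos_of_pos_of_lt_pi ht (by linarith)
  have hsin_st : 0 ≤ sin (s + t) := sin_nonneg_of_nonneg_of_le_pi (by linarith) hst
  rw [sgn_ne_sgn_iff] at h₁ h₂
  rcases lt_or_ge g₁ 0 with hg₁ | hg₁
  · have hg₂ : 0 ≤ g₂ := not_lt.mp (mt h₂.mpr hg₁.not_ge)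
    nlinarith [h₁.mpr hg₁]
  · nlinarith [not_le.mp (mt h₁.mp hg₁.not_gt), h₂.mp hg₁]

section InnerProductSpace

variable {E : Type*} [NormedAddCommGroup E] [InnerProductSpace ℝ E]

noncomputable def greatCircle (a b : E) (t : ℝ) : E := cos t • a + sin t • b

theorem inner_greatCircle (r a b : E) (t : ℝ) :
    ⟪r, greatCircle a b t⟫ = cos t * ⟪r, a⟫ + sin t * ⟪r, b⟫ := by
  simp [greatCircle, inner_add_right, real_inner_smul_right]

@[simp] theorem greatCircle_zero (a b : E) : greatCircle a b 0 = a := by simp [greatCircle]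

@[simp] theorem greatCircle_pi (a b : E) : greatCircle a b π = -a := by simp [greatCircle]

/-- For orthonormal `a, b`, the rotation by `t` in the plane `span {a, b}`, fixing its orthogonal
complement. -/
noncomputable def planeRotationₗ (a b : E) (t : ℝ) : E →ₗ[ℝ] E where
  toFun x := x + (⟪x, a⟫ * (cos t - 1) - ⟪x, b⟫ * sin t) • a
    + (⟪x, a⟫ * sin t + ⟪x, b⟫ * (cos t - 1)) • b
  map_add' x y := by simp only [inner_add_left]; module
  map_smul' c x := by simp only [real_inner_smul_left, RingHom.id_apply]; module

theorem planeRotationₗ_eq_self {a b x : E} (hxa : ⟪x, a⟫ = 0) (hxb : ⟪x, b⟫ = 0) (t : ℝ) :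
    planeRotationₗ a b t x = x := by
  simp [planeRotationₗ, hxa, hxb]

section PlaneRotation

variable {a b : E} (ha : ‖a‖ = 1) (hb : ‖b‖ = 1) (hab : ⟪a, b⟫ = 0)
include ha hb hab

theorem inner_planeRotationₗ_left (t : ℝ) (x : E) :
    ⟪planeRotationₗ a b t x, a⟫ = cos t * ⟪x, a⟫ - sin t * ⟪x, b⟫ ∧
    ⟪planeRotationₗ a b t x, b⟫ = sin t * ⟪x, a⟫ + cos t * ⟪x, b⟫ := by
  have hba : ⟪b, a⟫ = 0 := by rwa [real_inner_comm]
  simp only [planeRotationₗ, LinearMap.coe_mk, AddHom.coe_mk, inner_add_left,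
    real_inner_smul_left, real_inner_self_eq_norm_sq, ha, hb, hab, hba]
  constructor <;> ring

theorem inner_planeRotationₗ (t : ℝ) (x y : E) :
    ⟪planeRotationₗ a b t x, planeRotationₗ a b t y⟫ = ⟪x, y⟫ := by
  obtain ⟨hya, hyb⟩ := inner_planeRotationₗ_left ha hb hab t y
  set Ry := planeRotationₗ a b t y
  have hx : planeRotationₗ a b t x = x + (⟪x, a⟫ * (cos t - 1) - ⟪x, b⟫ * sin t) • a
      + (⟪x, a⟫ * sin t + ⟪x, b⟫ * (cos t - 1)) • b := rfl
  have hy : Ry = y + (⟪y, a⟫ * (cos t - 1) - ⟪y, b⟫ * sin t) • a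
      + (⟪y, a⟫ * sin t + ⟪y, b⟫ * (cos t - 1)) • b := rfl
  calc ⟪planeRotationₗ a b t x, Ry⟫
      = ⟪x, Ry⟫ + (⟪x, a⟫ * (cos t - 1) - ⟪x, b⟫ * sin t) * ⟪Ry, a⟫
        + (⟪x, a⟫ * sin t + ⟪x, b⟫ * (cos t - 1)) * ⟪Ry, b⟫ := by
        rw [hx]
        simp only [inner_add_left, real_inner_smul_left, real_inner_comm Ry a, real_inner_comm Ry b]
    _ = ⟪x, y⟫ := by
        rw [hya, hyb, hy]
        simp only [inner_add_right, real_inner_smul_right]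
        linear_combination (⟪y, a⟫ * ⟪x, a⟫ + ⟪y, b⟫ * ⟪x, b⟫) * sin_sq_add_cos_sq t

variable [FiniteDimensional ℝ E]

noncomputable def planeRotation (t : ℝ) : E ≃ₗᵢ[ℝ] E :=
  ((planeRotationₗ a b t).isometryOfInner (inner_planeRotationₗ ha hb hab t)).toLinearIsometryEquiv
    rfl

theorem planeRotation_apply (t : ℝ) (x : E) :
    planeRotation ha hb hab t x = planeRotationₗ a b t x :=
  rfl

theorem planeRotation_greatCircle (t α : ℝ) :
    planeRotation ha hb hab t (greatCircle a b α) = greatCircle a b (α + t) := by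
  have hba : ⟪b, a⟫ = 0 := by rwa [real_inner_comm]
  have h₁ : ⟪greatCircle a b α, a⟫ = cos α := by
    simp [greatCircle, inner_add_left, real_inner_smul_left, ha, hba]
  have h₂ : ⟪greatCircle a b α, b⟫ = sin α := by
    simp [greatCircle, inner_add_left, real_inner_smul_left, hb, hab]
  simp only [planeRotation_apply, planeRotationₗ, LinearMap.coe_mk, AddHom.coe_mk, h₁, h₂]
  simp only [greatCircle, cos_add, sin_add]
  module

theorem preimage_planeRotation_inter_subset {V : Submodule ℝ E} (hbV : b ∈ Vᗮ) {s t : ℝ}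
    (hst : sin (s - t) ≠ 0) :
    planeRotation ha hb hab s ⁻¹' V ∩ planeRotation ha hb hab t ⁻¹' V ⊆
      (V ⊓ (ℝ ∙ a)ᗮ : Submodule ℝ E) := by
  rintro x ⟨hs, ht⟩
  have es : sin s * ⟪x, a⟫ + cos s * ⟪x, b⟫ = 0 := by
    rw [← (inner_planeRotationₗ_left ha hb hab s x).2]
    exact Submodule.inner_right_of_mem_orthogonal hs hbV
  have et : sin t * ⟪x, a⟫ + cos t * ⟪x, b⟫ = 0 := by
    rw [← (inner_planeRotationₗ_left ha hb hab t x).2]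
    exact Submodule.inner_right_of_mem_orthogonal ht hbV
  have hxa : ⟪x, a⟫ = 0 := by
    refine (mul_eq_zero.mp ?_).resolve_left hst
    rw [sin_sub]; linear_combination cos t * es - cos s * et
  have hxb : ⟪x, b⟫ = 0 := by
    refine (mul_eq_zero.mp ?_).resolve_left hst
    rw [sin_sub]; linear_combination sin s * et - sin t * es
  refine ⟨?_, Submodule.mem_orthogonal_singleton_iff_inner_left.mpr hxa⟩
  simpa [planeRotation_apply, planeRotationₗ_eq_self hxa hxb] using hs

end PlaneRotation

theorem Submodule.exists_norm_eq_one_eq_norm_smul {K : Submodule ℝ E} (hK : K ≠ ⊥) {d : E}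
    (hd : d ∈ K) : ∃ b ∈ K, ‖b‖ = 1 ∧ d = ‖d‖ • b := by
  rcases eq_or_ne d 0 with rfl | hd0
  · obtain ⟨b, hbK, hb⟩ := K.exists_mem_ne_zero_of_ne_bot hK
    exact ⟨‖b‖⁻¹ • b, K.smul_mem _ hbK, norm_smul_inv_norm hb, by simp⟩
  · refine ⟨‖d‖⁻¹ • d, K.smul_mem _ hd, norm_smul_inv_norm hd0, ?_⟩
    rw [smul_smul, mul_inv_cancel₀ (norm_ne_zero_iff.mpr hd0), one_smul]

theorem exists_eq_greatCircle_arccos [FiniteDimensional ℝ E] (hE : 2 ≤ Module.finrank ℝ E)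
    {u v : E} (hu : ‖u‖ = 1) (hv : ‖v‖ = 1) :
    ∃ b, ‖b‖ = 1 ∧ ⟪u, b⟫ = 0 ∧ v = greatCircle u b (arccos ⟪u, v⟫) := by
  have hK : (ℝ ∙ u)ᗮ ≠ ⊥ := by
    rw [Ne, Submodule.orthogonal_eq_bot_iff]
    intro htop
    have := finrank_span_singleton (K := ℝ) (norm_ne_zero_iff.mp (hu.trans_ne one_ne_zero))
    rw [htop, finrank_top] at this
    omega
  set c := ⟪u, v⟫
  have huu : ⟪u, u⟫ = 1 := by rw [real_inner_self_eq_norm_sq, hu, one_pow]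
  set d := v - c • u
  have hd : d ∈ (ℝ ∙ u)ᗮ := by
    rw [Submodule.mem_orthogonal_singleton_iff_inner_right, inner_sub_right,
      real_inner_smul_right, huu, mul_one, sub_self]
  obtain ⟨b, hbK, hb, hdb⟩ := Submodule.exists_norm_eq_one_eq_norm_smul hK hd
  have hnorm_d : ‖d‖ = sin (arccos c) := by
    have hsq : ‖d‖ ^ 2 = 1 - c ^ 2 := by
      have hvv : ⟪v, v⟫ = 1 := by rw [real_inner_self_eq_norm_sq, hv, one_pow]
      rw [← real_inner_self_eq_norm_sq]
      simp only [d, inner_sub_left, inner_sub_right, real_inner_smul_left, real_inner_smul_right,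
        huu, hvv, real_inner_comm u v]
      ring
    rw [sin_arccos, ← hsq, sqrt_sq (norm_nonneg d)]
  have hc : |c| ≤ 1 := by simpa [hu, hv] using abs_real_inner_le_norm u v
  refine ⟨b, hb, Submodule.mem_orthogonal_singleton_iff_inner_right.mp hbK, ?_⟩
  rw [greatCircle, cos_arccos (abs_le.mp hc).1 (abs_le.mp hc).2, ← hnorm_d, ← hdb]
  simp [d]

def separatingNormals (x y : E) : Set E := {r | sgn ⟪r, x⟫ ≠ sgn ⟪r, y⟫}

@[simp] theorem separatingNormals_self (x : E) : separatingNormals x x = ∅ := by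
  simp [separatingNormals]

theorem separatingNormals_neg (x : E) : separatingNormals x (-x) = {r | ⟪r, x⟫ = 0}ᶜ := by
  ext r
  simp only [separatingNormals, mem_ofPred_eq, mem_compl_iff, inner_neg_right, sgn_ne_sgn_iff,
    neg_lt_zero]
  exact ⟨fun h h0 => by simp [h0] at h, fun h => ⟨fun h' => h'.lt_of_ne' h, le_of_lt⟩⟩

theorem separatingNormals_eq_symmDiff (x y z : E) :
    separatingNormals x z = symmDiff (separatingNormals x y) (separatingNormals y z) := by
  ext r
  simp only [separatingNormals, Set.mem_symmDiff, mem_ofPred_eq, sgn]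
  split_ifs <;> norm_num

theorem preimage_separatingNormals (T : E ≃ₗᵢ[ℝ] E) (x y : E) :
    T ⁻¹' separatingNormals (T x) (T y) = separatingNormals x y := by
  ext r
  simp [separatingNormals, T.inner_map_map]

theorem separatingNormals_greatCircle_inter_subset (a b : E) {s t : ℝ} (hs : 0 < s) (ht : 0 < t)
    (hst : s + t ≤ π) :
    separatingNormals a (greatCircle a b s) ∩
      separatingNormals (greatCircle a b s) (greatCircle a b (s + t)) ⊆ {r | ⟪r, a⟫ = 0} := by
  rintro r ⟨h₁, h₂⟩
  simp only [separatingNormals, mem_ofPred_eq, inner_greatCircle] at h₁ h₂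
  exact eq_zero_of_sgn_ne_of_sgn_ne hs ht hst h₁ h₂

theorem sgn_inner_mul_sgn_inner (x y r : E) :
    sgn ⟪r, x⟫ * sgn ⟪r, y⟫ = 1 - 2 * (separatingNormals x y).indicator 1 r := by
  simp only [separatingNormals, indicator, mem_ofPred_eq, Pi.one_apply, sgn]
  split_ifs <;> norm_num at *

end InnerProductSpace

theorem Measure.eq_zero_of_pairwise_aedisjoint {α ι : Type*} [MeasurableSpace α] [Infinite ι]
    {μ : Measure α} [IsFiniteMeasure μ] {s : ι → Set α} (hs : ∀ i, NullMeasurableSet (s i) μ)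
    (hd : Pairwise (AEDisjoint μ on s)) {c : ENNReal} (hc : ∀ i, μ (s i) = c) : c = 0 := by
  by_contra hc0
  let e := Infinite.natEmbedding ι
  have := measure_iUnion₀ (hd.comp_of_injective e.injective) (fun k => hs (e k))
  simp only [hc, ENNReal.tsum_const_eq_top_of_ne_zero hc0] at this
  exact measure_ne_top μ _ this

section Measure

variable {E : Type*} [NormedAddCommGroup E] [InnerProductSpace ℝ E] [MeasurableSpace E]
  [BorelSpace E] {μ : Measure E}

theorem measurableSet_separatingNormals (x y : E) : MeasurableSet (separatingNormals x y) := by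
  have hsgn : Measurable sgn := Measurable.ite measurableSet_Ici measurable_const measurable_const
  have hx : Measurable fun r : E => sgn ⟪r, x⟫ :=
    hsgn.comp (continuous_id.inner continuous_const).measurable
  have hy : Measurable fun r : E => sgn ⟪r, y⟫ :=
    hsgn.comp (continuous_id.inner continuous_const).measurable
  exact (measurableSet_eq_fun hx hy).compl

theorem integral_sgn_inner_mul_sgn_inner [IsProbabilityMeasure μ] (x y : E) :
    ∫ r, sgn ⟪r, x⟫ * sgn ⟪r, y⟫ ∂μ = 1 - 2 * μ.real (separatingNormals x y) := by
  have hs := measurableSet_separatingNormals x y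
  simp_rw [sgn_inner_mul_sgn_inner]
  rw [integral_sub (integrable_const _) (((integrable_const 1).indicator hs).const_mul 2),
    integral_const_mul, integral_indicator_one hs]
  simp

theorem measure_separatingNormals_map (hinv : ∀ T : E ≃ₗᵢ[ℝ] E, μ.map T = μ) (T : E ≃ₗᵢ[ℝ] E)
    (x y : E) : μ (separatingNormals (T x) (T y)) = μ (separatingNormals x y) := by
  rw [← MeasurePreserving.measure_preimage ⟨T.continuous.measurable, hinv T⟩
    (measurableSet_separatingNormals _ _).nullMeasurableSet, preimage_separatingNormals]

variable [FiniteDimensional ℝ E]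

theorem measure_submodule_eq_zero [IsFiniteMeasure μ] (h0 : μ {0} = 0)
    (hinv : ∀ T : E ≃ₗᵢ[ℝ] E, μ.map T = μ) (V : Submodule ℝ E) (hV : V ≠ ⊤) : μ V = 0 := by
  induction hk : Module.finrank ℝ V using Nat.strong_induction_on generalizing V with
  | _ k ih =>
  rcases eq_or_ne V ⊥ with rfl | hV0
  · simpa using h0
  obtain ⟨a, haV, ha, -⟩ := V.exists_norm_eq_one_eq_norm_smul hV0 V.zero_mem
  obtain ⟨b, hbV, hb, -⟩ := Vᗮ.exists_norm_eq_one_eq_norm_smul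
    (Submodule.orthogonal_eq_bot_iff.not.mpr hV) Vᗮ.zero_mem
  have hab : ⟪a, b⟫ = 0 := Submodule.inner_right_of_mem_orthogonal haV hbV
  have hWV : V ⊓ (ℝ ∙ a)ᗮ < V := by
    refine SetLike.lt_iff_le_and_exists.mpr ⟨inf_le_left, a, haV, fun h => ?_⟩
    have := Submodule.mem_orthogonal_singleton_iff_inner_left.mp h.2
    rw [real_inner_self_eq_norm_sq, ha] at this
    norm_num at this
  have hW : μ (V ⊓ (ℝ ∙ a)ᗮ : Submodule ℝ E) = 0 :=
    ih _ (hk ▸ Submodule.finrank_lt_finrank_of_lt hWV) _ (ne_top_of_le_ne_top hV hWV.le) rfl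
  have hVmeas : MeasurableSet (V : Set E) := V.closed_of_finiteDimensional.measurableSet
  have : Infinite (Ioo 0 π) := (Ioo_infinite pi_pos).to_subtype
  refine Measure.eq_zero_of_pairwise_aedisjoint
    (s := fun t : Ioo 0 π => planeRotation ha hb hab t ⁻¹' V)
    (fun t => (hVmeas.preimage (planeRotation ha hb hab t).continuous.measurable).nullMeasurableSet)
    (fun s t hst => measure_mono_null (preimage_planeRotation_inter_subset ha hb hab hbV ?_) hW)
    (fun t => MeasurePreserving.measure_preimage
      ⟨(planeRotation ha hb hab t).continuous.measurable, hinv _⟩ hVmeas.nullMeasurableSet)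
  rw [Ne, sin_eq_zero_iff_of_lt_of_lt (by linarith [s.2.1, t.2.2]) (by linarith [s.2.2, t.2.1]),
    sub_eq_zero]
  exact fun h => hst (Subtype.ext h)

theorem measure_inner_eq_zero [IsFiniteMeasure μ] (h0 : μ {0} = 0)
    (hinv : ∀ T : E ≃ₗᵢ[ℝ] E, μ.map T = μ) {x : E} (hx : x ≠ 0) : μ {r | ⟪r, x⟫ = 0} = 0 := by
  have : {r | ⟪r, x⟫ = 0} = ((ℝ ∙ x)ᗮ : Submodule ℝ E) := by
    ext r; exact Submodule.mem_orthogonal_singleton_iff_inner_left.symm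
  rw [this]
  refine measure_submodule_eq_zero h0 hinv _ ?_
  rwa [Ne, Submodule.orthogonal_eq_top_iff, Submodule.span_singleton_eq_bot]

section GreatCircle

variable (h0 : μ {0} = 0) (hinv : ∀ T : E ≃ₗᵢ[ℝ] E, μ.map T = μ)
  {a b : E} (ha : ‖a‖ = 1) (hb : ‖b‖ = 1) (hab : ⟪a, b⟫ = 0)
include h0 hinv ha hb hab

theorem measure_separatingNormals_greatCircle_add [IsFiniteMeasure μ] {s t : ℝ} (hs : 0 < s)
    (ht : 0 < t) (hst : s + t ≤ π) :
    μ (separatingNormals a (greatCircle a b (s + t))) =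
      μ (separatingNormals a (greatCircle a b s)) +
        μ (separatingNormals a (greatCircle a b t)) := by
  have hrot : μ (separatingNormals (greatCircle a b s) (greatCircle a b (s + t))) =
      μ (separatingNormals a (greatCircle a b t)) := by
    have h₁ : planeRotation ha hb hab s a = greatCircle a b s := by
      simpa using planeRotation_greatCircle ha hb hab s 0
    have h₂ : planeRotation ha hb hab s (greatCircle a b t) = greatCircle a b (s + t) := by
      rw [planeRotation_greatCircle, add_comm]
    rw [← h₁, ← h₂, measure_separatingNormals_map hinv]
  have hnull : μ (separatingNormals a (greatCircle a b s) ∩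
      separatingNormals (greatCircle a b s) (greatCircle a b (s + t))) = 0 :=
    measure_mono_null (separatingNormals_greatCircle_inter_subset a b hs ht hst)
      (measure_inner_eq_zero h0 hinv (norm_ne_zero_iff.mp (ha.trans_ne one_ne_zero)))
  rw [separatingNormals_eq_symmDiff a (greatCircle a b s), measure_symmDiff_eq
    (measurableSet_separatingNormals _ _).nullMeasurableSet
    (measurableSet_separatingNormals _ _).nullMeasurableSet, measure_sdiff_null' hnull,
    measure_sdiff_null' (inter_comm _ _ ▸ hnull), hrot]

theorem measureReal_separatingNormals_greatCircle [IsProbabilityMeasure μ] {γ : ℝ} (hγ₀ : 0 ≤ γ)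
    (hγ : γ ≤ π) : μ.real (separatingNormals a (greatCircle a b γ)) = γ / π := by
  have hπ : μ.real (separatingNormals a (greatCircle a b π)) = 1 := by
    have hnull := measure_inner_eq_zero h0 hinv (norm_ne_zero_iff.mp (ha.trans_ne one_ne_zero))
    rw [greatCircle_pi, separatingNormals_neg, measureReal_compl₀ (.of_null hnull), probReal_univ,
      measureReal_def, hnull, ENNReal.toReal_zero, sub_zero]
  have hadd (s t : ℝ) (hs : 0 < s) (ht : 0 < t) (hst : s + t ≤ π) :
      μ.real (separatingNormals a (greatCircle a b (s + t))) =
        μ.real (separatingNormals a (greatCircle a b s)) +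
          μ.real (separatingNormals a (greatCircle a b t)) := by
    simp only [measureReal_def,
      measure_separatingNormals_greatCircle_add h0 hinv ha hb hab hs ht hst]
    exact ENNReal.toReal_add (measure_ne_top _ _) (measure_ne_top _ _)
  rw [eq_div_mul_of_add (F := fun γ => μ.real (separatingNormals a (greatCircle a b γ))) (by simp)
    hadd pi_pos (fun _ _ => measureReal_nonneg) ⟨hγ₀, hγ⟩, hπ,
    mul_one]

end GreatCircle

theorem measureReal_separatingNormals [IsProbabilityMeasure μ] (hE : 2 ≤ Module.finrank ℝ E)
    (h0 : μ {0} = 0) (hinv : ∀ T : E ≃ₗᵢ[ℝ] E, μ.map T = μ) {u v : E} (hu : ‖u‖ = 1)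
    (hv : ‖v‖ = 1) : μ.real (separatingNormals u v) = arccos ⟪u, v⟫ / π := by
  obtain ⟨b, hb, hub, hvb⟩ := exists_eq_greatCircle_arccos hE hu hv
  conv_lhs => rw [hvb]
  exact measureReal_separatingNormals_greatCircle h0 hinv hu hb hub (arccos_nonneg _)
    (arccos_le_pi _)

end Measure

/-- If `u, v` are unit vectors in `ℝ^n` (`n ≥ 2`) and `r` is distributed
according to the uniform (i.e. rotation-invariant) probability measure on the unit
sphere, then `𝔼[sgn⟨r,u⟩ · sgn⟨r,v⟩] = 1 - (2/π) · arccos ⟨u,v⟩`. -/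
theorem expectation_sign_product_eq_one_sub_two_arccos_div_pi
    (n : ℕ) (hn : 2 ≤ n)
    (u v : EuclideanSpace ℝ (Fin n)) (hu : ‖u‖ = 1) (hv : ‖v‖ = 1)
    (μ : Measure (EuclideanSpace ℝ (Fin n))) [IsProbabilityMeasure μ]
    (hsphere : μ {r | ‖r‖ = 1} = 1)
    (hinv : ∀ T : EuclideanSpace ℝ (Fin n) ≃ₗᵢ[ℝ] EuclideanSpace ℝ (Fin n),
      μ.map T = μ) :
    ∫ r, sgn (inner ℝ r u : ℝ) * sgn (inner ℝ r v : ℝ) ∂μ =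
      1 - (2 / π) * Real.arccos (inner ℝ u v : ℝ) := by
  have h0 : μ {0} = 0 := by
    refine measure_mono_null (fun r hr => by simp [mem_singleton_iff.mp hr])
      ((prob_compl_eq_zero_iff (isClosed_eq continuous_norm continuous_const).measurableSet).mpr
        hsphere)
  rw [integral_sgn_inner_mul_sgn_inner, measureReal_separatingNormals
    (by rwa [finrank_euclideanSpace_fin]) h0 hinv hu hv]
  ring
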